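/- Let γ > 1 and ρ₀ > 0. For ρ₁ > ρ₀ define u₁(ρ₁) = (ρ₁ − ρ₀) √( 2(ρ₁^{γ−1} − ρ₀^{γ−1}) / (ρ₁² − ρ₀²) ) and c₁(ρ₁) = ρ₁^{(γ−1)/2}. Then there exists a unique ρᶜ > ρ₀ such that u₁(ρ₁) ≤ c₁(ρ₁) for all ρ₁ ∈ (ρ₀, ρᶜ] and u₁(ρ₁) > c₁(ρ₁) for all ρ₁ ∈ (ρᶜ, ∞). -/

import Mathlib

/-!
Squaring removes the square root: for `ρ₁ > ρ₀` one has `u₁² = M(ρ₁) c₁²` with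
`M(ρ) = 2(ρ - ρ₀)/(ρ + ρ₀) · (1 - (ρ₀/ρ)^(γ-1))`, the squared Mach number of state (1), so
`u₁ ≤ c₁` exactly when `M(ρ₁) ≤ 1`. Both factors of `M` are nonnegative and strictly increasing
on `[ρ₀, ∞)`, `M(ρ₀) = 0` and `M(ρ) → 2` as `ρ → ∞`, so by continuity `M` crosses the level `1`
exactly once, at `ρᶜ`.
-/

/-- The velocity u₁ of state (1) as a function of ρ₁ (with ρ₀ fixed):
u₁(ρ₁) = (ρ₁ − ρ₀) √(2(ρ₁^(γ−1) − ρ₀^(γ−1))/(ρ₁² − ρ₀²)). -/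
noncomputable def uOne (γ ρ₀ ρ₁ : ℝ) : ℝ :=
  (ρ₁ - ρ₀) * Real.sqrt (2 * (ρ₁ ^ (γ - 1) - ρ₀ ^ (γ - 1)) / (ρ₁^2 - ρ₀^2))

/-- The sonic speed of state (1): c₁(ρ₁) = ρ₁^((γ−1)/2). -/
noncomputable def cOne (γ ρ₁ : ℝ) : ℝ := ρ₁ ^ ((γ - 1) / 2)

open Filter Topology Set

theorem StrictMonoOn.existsUnique_threshold {α δ : Type*} [ConditionallyCompleteLinearOrder α]
    [TopologicalSpace α] [OrderTopology α] [DenselyOrdered α] [LinearOrder δ] [TopologicalSpace δ]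
    [OrderClosedTopology δ] {f : α → δ} {a b : α} {y : δ} (hf : StrictMonoOn f (Ici a))
    (hab : a ≤ b) (hcont : ContinuousOn f (Icc a b)) (ha : f a < y) (hb : y < f b) :
    ∃! c, a < c ∧ (∀ x, a < x → x ≤ c → f x ≤ y) ∧ (∀ x, c < x → y < f x) := by
  obtain ⟨c, ⟨hac, -⟩, hfc⟩ := intermediate_value_Icc hab hcont ⟨ha.le, hb.le⟩
  have hac : a < c := hac.lt_of_ne <| by rintro rfl; exact ha.ne hfc
  have below : ∀ x, a < x → x ≤ c → f x ≤ y := fun x hx hxc =>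
    hfc ▸ hf.monotoneOn hx.le hac.le hxc
  have above : ∀ x, c < x → y < f x := fun x hcx => hfc ▸ hf hac.le (hac.trans hcx).le hcx
  refine ⟨c, ⟨hac, below, above⟩, fun c' ⟨hac', below', above'⟩ => ?_⟩
  by_contra hne
  rcases lt_or_gt_of_ne hne with hlt | hlt
  · exact (above' c hlt).not_ge (below c hac le_rfl)
  · exact (above c' hlt).not_ge (below' c' hac' le_rfl)

noncomputable def machSq (γ ρ₀ ρ : ℝ) : ℝ :=
  2 * (ρ - ρ₀) / (ρ + ρ₀) * (1 - (ρ₀ / ρ) ^ (γ - 1))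

section

variable {γ ρ₀ ρ : ℝ}

lemma sq_cOne (γ : ℝ) (hρ : 0 ≤ ρ) : cOne γ ρ ^ 2 = ρ ^ (γ - 1) := by
  rw [cOne, ← Real.rpow_natCast, ← Real.rpow_mul hρ]
  norm_num

lemma sq_uOne (hγ : 1 ≤ γ) (hρ₀ : 0 < ρ₀) (hρ : ρ₀ < ρ) :
    uOne γ ρ₀ ρ ^ 2 = machSq γ ρ₀ ρ * ρ ^ (γ - 1) := by
  have hρpos : 0 < ρ := hρ₀.trans hρ
  have hpow : ρ₀ ^ (γ - 1) ≤ ρ ^ (γ - 1) := Real.rpow_le_rpow hρ₀.le hρ.le (by linarith)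
  have hsq : 0 < ρ ^ 2 - ρ₀ ^ 2 := by nlinarith
  rw [uOne, machSq, mul_pow, Real.sq_sqrt (div_nonneg (by linarith) hsq.le),
    Real.div_rpow hρ₀.le hρpos.le]
  have : ρ ^ (γ - 1) ≠ 0 := (Real.rpow_pos_of_pos hρpos _).ne'
  have : ρ + ρ₀ ≠ 0 := by positivity
  field_simp [hsq.ne']
  ring

lemma uOne_le_cOne_iff (hγ : 1 ≤ γ) (hρ₀ : 0 < ρ₀) (hρ : ρ₀ < ρ) :
    uOne γ ρ₀ ρ ≤ cOne γ ρ ↔ machSq γ ρ₀ ρ ≤ 1 := by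
  have hρpos : 0 < ρ := hρ₀.trans hρ
  have hu : 0 ≤ uOne γ ρ₀ ρ := mul_nonneg (sub_nonneg.2 hρ.le) (Real.sqrt_nonneg _)
  have hc : 0 ≤ cOne γ ρ := Real.rpow_nonneg hρpos.le _
  rw [← pow_le_pow_iff_left₀ hu hc two_ne_zero, sq_uOne hγ hρ₀ hρ, sq_cOne γ hρpos.le,
    mul_le_iff_le_one_left (Real.rpow_pos_of_pos hρpos _)]

@[simp]
lemma machSq_self : machSq γ ρ₀ ρ₀ = 0 := by simp [machSq]

lemma strictMonoOn_machSq (hγ : 1 < γ) (hρ₀ : 0 < ρ₀) : StrictMonoOn (machSq γ ρ₀) (Ici ρ₀) := by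
  intro a (ha : ρ₀ ≤ a) b (hb : ρ₀ ≤ b) hab
  have hapos : 0 < a := hρ₀.trans_le ha
  have hbpos : 0 < b := hρ₀.trans_le hb
  have hratio_le : ρ₀ / a ≤ 1 := div_le_one_of_le₀ ha hapos.le
  have hfactor : 2 * (a - ρ₀) / (a + ρ₀) < 2 * (b - ρ₀) / (b + ρ₀) := by
    rw [div_lt_div_iff₀ (by linarith) (by linarith)]
    nlinarith
  have hpow : (ρ₀ / b) ^ (γ - 1) < (ρ₀ / a) ^ (γ - 1) :=
    Real.rpow_lt_rpow (by positivity) (div_lt_div_of_pos_left hρ₀ hapos hab) (by linarith)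
  have hpow_le : (ρ₀ / a) ^ (γ - 1) ≤ 1 :=
    Real.rpow_le_one (by positivity) hratio_le (by linarith)
  exact mul_lt_mul'' hfactor (by linarith) (div_nonneg (by linarith) (by linarith))
    (by linarith)

lemma continuousOn_machSq (hρ₀ : 0 < ρ₀) : ContinuousOn (machSq γ ρ₀) (Ici ρ₀) := by
  have hne : ∀ ρ ∈ Ici ρ₀, ρ ≠ 0 := fun ρ (hρ : ρ₀ ≤ ρ) => (hρ₀.trans_le hρ).ne'
  have hne' : ∀ ρ ∈ Ici ρ₀, ρ + ρ₀ ≠ 0 := fun ρ (hρ : ρ₀ ≤ ρ) => by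
    have := hρ₀.trans_le hρ; positivity
  unfold machSq
  exact ((continuousOn_const.mul (continuousOn_id.sub continuousOn_const)).div
    (continuousOn_id.add continuousOn_const) hne').mul
    (continuousOn_const.sub ((continuousOn_const.div continuousOn_id hne).rpow_const
      fun ρ hρ => Or.inl (div_ne_zero hρ₀.ne' (hne ρ hρ))))

lemma tendsto_machSq_atTop (hγ : 1 < γ) : Tendsto (machSq γ ρ₀) atTop (𝓝 2) := by
  have hfactor : Tendsto (fun ρ => 2 * (ρ - ρ₀) / (ρ + ρ₀)) atTop (𝓝 2) := by
    have : Tendsto (fun ρ => 2 - 4 * ρ₀ / (ρ + ρ₀)) atTop (𝓝 (2 - 0)) :=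
      tendsto_const_nhds.sub <|
        tendsto_const_nhds.div_atTop (tendsto_atTop_add_const_right _ _ tendsto_id)
    refine (sub_zero (2 : ℝ) ▸ this).congr' ?_
    filter_upwards [eventually_gt_atTop (-ρ₀)] with ρ hρ
    have : ρ + ρ₀ ≠ 0 := by linarith
    field_simp
    ring
  have hpow : Tendsto (fun ρ => (ρ₀ / ρ) ^ (γ - 1)) atTop (𝓝 0) := by
    have := ((tendsto_const_nhds (x := ρ₀)).div_atTop tendsto_id).rpow_const (p := γ - 1)
      (Or.inr (by linarith))
    rwa [Real.zero_rpow (by linarith)] at this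
  have h := hfactor.mul ((tendsto_const_nhds (x := (1 : ℝ))).sub hpow)
  rwa [sub_zero, mul_one] at h

end

/-- There is a unique critical density ρᶜ > ρ₀ such that
u₁(ρ₁) ≤ c₁(ρ₁) for ρ₁ ∈ (ρ₀, ρᶜ] and u₁(ρ₁) > c₁(ρ₁) for ρ₁ ∈ (ρᶜ, ∞). -/
theorem critical_density_dichotomy
    (γ ρ₀ : ℝ) (hγ : 1 < γ) (hρ₀ : 0 < ρ₀) :
    ∃! ρc : ℝ, ρ₀ < ρc ∧
      (∀ ρ₁ : ℝ, ρ₀ < ρ₁ → ρ₁ ≤ ρc → uOne γ ρ₀ ρ₁ ≤ cOne γ ρ₁) ∧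
      (∀ ρ₁ : ℝ, ρc < ρ₁ → cOne γ ρ₁ < uOne γ ρ₀ ρ₁) := by
  obtain ⟨b, hb, hρ₀b⟩ := (((tendsto_machSq_atTop hγ).eventually (lt_mem_nhds one_lt_two)).and
    (eventually_ge_atTop ρ₀)).exists
  have threshold := (strictMonoOn_machSq hγ hρ₀).existsUnique_threshold hρ₀b
    ((continuousOn_machSq hρ₀).mono Icc_subset_Ici_self) (by simp) hb
  refine (existsUnique_congr fun c => and_congr_right fun hc => and_congr ?_ ?_).2 threshold
  · exact forall₂_congr fun ρ hρ => imp_congr_right fun _ => uOne_le_cOne_iff hγ.le hρ₀ hρ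
  · exact forall₂_congr fun ρ hρ =>
      lt_iff_lt_of_le_iff_le (uOne_le_cOne_iff hγ.le hρ₀ (hc.trans hρ))
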